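/- arXiv:1508.04514 — 2 statements merged into one kernel-verified Lean document; each statement's English description precedes it below -/
import Mathlib

section
/- Let (Ω, Σ, μ) be a probability space and let x : Ω → ℝ^m and y : Ω → ℝ^n be random vectors whose components all lie in L²(μ). Let S be the positive semidefinite square root of E_yy (a real symmetric positive semidefinite n×n matrix with S·S = E_yy), and let B be the Moore–Penrose inverse of S. Then for every real m×n matrix F, ∫_Ω ‖x(ω) − F·y(ω)‖₂² dμ(ω) = tr(E_xx) − ‖E_xy·B‖_F² + ‖E_xy·B − F·S‖_F², where ‖·‖_F is the Frobenius norm and tr the matrix trace. -/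
open MeasureTheory Matrix

/-- Frobenius norm of a real matrix: square root of the sum of squares of entries. -/
noncomputable def frobNorm {m n : Type*} [Fintype m] [Fintype n] (A : Matrix m n ℝ) : ℝ :=
  Real.sqrt (∑ i, ∑ j, (A i j) ^ 2)

/-- The four Penrose equations characterizing the Moore–Penrose inverse. -/
def IsMoorePenrose {m n : Type*} [Fintype m] [Fintype n]
    (G : Matrix m n ℝ) (B : Matrix n m ℝ) : Prop :=
  G * B * G = G ∧ B * G * B = B ∧ (G * B)ᵀ = G * B ∧ (B * G)ᵀ = B * G

/-!
Expanding the square, `E‖x - F y‖² = tr (E_xx - E_xy Fᵀ - F E_xyᵀ + F E_yy Fᵀ)`; expanding the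
Frobenius norm gives the same expression as soon as `E_xy B S = E_xy` and `S S = E_yy`.
The first identity holds because `S B S = S` makes `B S - 1` map into `ker S`, and
`ker S ⊆ ker E_yy ⊆ ker E_xy`: if `E_yy v = 0` then `E (y ⬝ v)² = vᵀ E_yy v = 0`, so `y ⬝ v = 0`
almost surely and `E_xy v = E [x (y ⬝ v)] = 0`.
-/

theorem frobNorm_sq_eq_trace {m n : Type*} [Fintype m] [Fintype n] (A : Matrix m n ℝ) :
    frobNorm A ^ 2 = trace (A * Aᵀ) := by
  rw [frobNorm, Real.sq_sqrt (by positivity)]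
  simp [trace, mul_apply, sq]

namespace Matrix

variable {R l n p : Type*} [CommRing R]

theorem mul_mul_eq_self_of_ker_le [Fintype n] [Fintype p] {E : Matrix l n R}
    {S : Matrix p n R} {B : Matrix n p R} (hSBS : S * B * S = S)
    (hker : ∀ v, S *ᵥ v = 0 → E *ᵥ v = 0) : E * B * S = E := by
  refine ext_iff_mulVec.2 fun v => ?_
  have hS : S *ᵥ ((B * S) *ᵥ v - v) = 0 := by
    rw [mulVec_sub, mulVec_mulVec, ← Matrix.mul_assoc, hSBS, sub_self]
  have hE := hker _ hS
  rwa [mulVec_sub, mulVec_mulVec, ← Matrix.mul_assoc, sub_eq_zero] at hE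

theorem sub_mul_mul_transpose_sub_mul [Fintype n] {A E F : Matrix l n R} {S : Matrix n n R}
    (hS : S.IsSymm) (hAS : A * S = E) :
    (A - F * S) * (A - F * S)ᵀ = A * Aᵀ - E * Fᵀ - F * Eᵀ + F * (S * S) * Fᵀ := by
  have hSA : S * Aᵀ = Eᵀ := by rw [← hS.eq, ← transpose_mul, hAS]
  rw [transpose_sub, transpose_mul F S, hS.eq, ← hSA, ← hAS]
  simp only [Matrix.sub_mul, Matrix.mul_sub, Matrix.mul_assoc]
  abel

end Matrix

namespace ProbabilityTheory

variable {Ω ι κ α : Type*} [MeasurableSpace Ω] {μ : Measure Ω}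

noncomputable def secondMoment (μ : Measure Ω) (x : Ω → ι → ℝ) (y : Ω → κ → ℝ) :
    Matrix ι κ ℝ :=
  Matrix.of fun i j => ∫ ω, x ω i * y ω j ∂μ

@[simp]
theorem secondMoment_apply (x : Ω → ι → ℝ) (y : Ω → κ → ℝ) (i : ι) (j : κ) :
    secondMoment μ x y i j = ∫ ω, x ω i * y ω j ∂μ := rfl

theorem transpose_secondMoment (x : Ω → ι → ℝ) (y : Ω → κ → ℝ) :
    (secondMoment μ x y)ᵀ = secondMoment μ y x := by
  ext i j
  simp [mul_comm]

theorem secondMoment_sub_left {x₁ x₂ : Ω → ι → ℝ} {y : Ω → κ → ℝ}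
    (h₁ : ∀ i j, Integrable (fun ω => x₁ ω i * y ω j) μ)
    (h₂ : ∀ i j, Integrable (fun ω => x₂ ω i * y ω j) μ) :
    secondMoment μ (x₁ - x₂) y = secondMoment μ x₁ y - secondMoment μ x₂ y := by
  ext i j
  simp [sub_mul, integral_sub (h₁ i j) (h₂ i j)]

theorem secondMoment_sub_right {x : Ω → ι → ℝ} {y₁ y₂ : Ω → κ → ℝ}
    (h₁ : ∀ i j, Integrable (fun ω => x ω i * y₁ ω j) μ)
    (h₂ : ∀ i j, Integrable (fun ω => x ω i * y₂ ω j) μ) :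
    secondMoment μ x (y₁ - y₂) = secondMoment μ x y₁ - secondMoment μ x y₂ := by
  ext i j
  simp [mul_sub, integral_sub (h₁ i j) (h₂ i j)]

variable [Fintype ι]

theorem secondMoment_mulVec_left {x : Ω → ι → ℝ} {y : Ω → κ → ℝ} (P : Matrix α ι ℝ)
    (hxy : ∀ i j, Integrable (fun ω => x ω i * y ω j) μ) :
    secondMoment μ (fun ω => P *ᵥ x ω) y = P * secondMoment μ x y := by
  ext a j
  simp only [secondMoment_apply, mulVec, dotProduct, mul_apply, Finset.sum_mul, mul_assoc]
  rw [integral_finsetSum _ fun i _ => (hxy i j).const_mul (P a i)]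
  simp only [integral_const_mul]

theorem secondMoment_mulVec_right {x : Ω → κ → ℝ} {y : Ω → ι → ℝ} (Q : Matrix α ι ℝ)
    (hxy : ∀ i j, Integrable (fun ω => x ω i * y ω j) μ) :
    secondMoment μ x (fun ω => Q *ᵥ y ω) = secondMoment μ x y * Qᵀ := by
  have hyx : ∀ j i, Integrable (fun ω => y ω j * x ω i) μ := fun j i => by
    simpa only [mul_comm] using hxy i j
  rw [← transpose_secondMoment, secondMoment_mulVec_left Q hyx, transpose_mul,
    transpose_secondMoment]

theorem memLp_mulVec_apply {p : ENNReal} {x : Ω → ι → ℝ} (P : Matrix α ι ℝ)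
    (hx : ∀ i, MemLp (fun ω => x ω i) p μ) (a : α) :
    MemLp (fun ω => (P *ᵥ x ω) a) p μ :=
  memLp_finsetSum _ fun i _ => (hx i).const_mul (P a i)

theorem trace_secondMoment_self {z : Ω → ι → ℝ} (hz : ∀ i, MemLp (fun ω => z ω i) 2 μ) :
    trace (secondMoment μ z z) = ∫ ω, ∑ i, z ω i ^ 2 ∂μ := by
  rw [integral_finsetSum _ fun i _ => (hz i).integrable_sq]
  simp [trace, sq]

theorem secondMoment_mulVec_apply {x : Ω → κ → ℝ} {y : Ω → ι → ℝ}
    (hxy : ∀ i j, Integrable (fun ω => x ω i * y ω j) μ) (v : ι → ℝ) (k : κ) :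
    (secondMoment μ x y *ᵥ v) k = ∫ ω, x ω k * (y ω ⬝ᵥ v) ∂μ := by
  simp only [mulVec, dotProduct, secondMoment_apply, Finset.mul_sum, ← mul_assoc]
  rw [integral_finsetSum _ fun j _ => (hxy k j).mul_const (v j)]
  simp only [integral_mul_const]

theorem secondMoment_mulVec_eq_zero {x : Ω → κ → ℝ} {y : Ω → ι → ℝ}
    (hx : ∀ k, MemLp (fun ω => x ω k) 2 μ) (hy : ∀ i, MemLp (fun ω => y ω i) 2 μ)
    {v : ι → ℝ} (hv : secondMoment μ y y *ᵥ v = 0) : secondMoment μ x y *ᵥ v = 0 := by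
  have hyv : MemLp (fun ω => y ω ⬝ᵥ v) 2 μ :=
    memLp_finsetSum _ fun i _ => (hy i).mul_const (v i)
  have hsq : ∫ ω, (y ω ⬝ᵥ v) ^ 2 ∂μ = 0 := calc
    ∫ ω, (y ω ⬝ᵥ v) ^ 2 ∂μ = ∫ ω, ∑ i, v i * (y ω i * (y ω ⬝ᵥ v)) ∂μ := by
      congr 1 with ω
      rw [sq, dotProduct_comm, dotProduct, Finset.sum_mul]
      simp only [mul_assoc]
    _ = v ⬝ᵥ (secondMoment μ y y *ᵥ v) := by
      rw [integral_finsetSum (f := fun i ω => v i * (y ω i * (y ω ⬝ᵥ v))) _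
        fun i _ => ((hy i).integrable_mul hyv).const_mul (v i)]
      simp only [integral_const_mul, dotProduct,
        secondMoment_mulVec_apply (fun i j => (hy i).integrable_mul (hy j))]
    _ = 0 := by rw [hv, dotProduct_zero]
  have hzero : (fun ω => y ω ⬝ᵥ v) =ᵐ[μ] 0 := by
    have := (integral_eq_zero_iff_of_nonneg (fun ω => sq_nonneg _) hyv.integrable_sq).1 hsq
    filter_upwards [this] with ω hω using pow_eq_zero_iff two_ne_zero |>.1 hω
  ext k
  rw [secondMoment_mulVec_apply (fun k i => (hx k).integrable_mul (hy i)), Pi.zero_apply]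
  exact integral_eq_zero_of_ae (by filter_upwards [hzero] with ω hω using by simp [hω])

theorem integral_sum_sq_sub_mulVec [Fintype κ] {x : Ω → κ → ℝ} {y : Ω → ι → ℝ}
    (hx : ∀ k, MemLp (fun ω => x ω k) 2 μ) (hy : ∀ i, MemLp (fun ω => y ω i) 2 μ)
    (F : Matrix κ ι ℝ) :
    ∫ ω, ∑ k, (x ω k - (F *ᵥ y ω) k) ^ 2 ∂μ =
      trace (secondMoment μ x x - secondMoment μ x y * Fᵀ - F * (secondMoment μ x y)ᵀ
        + F * secondMoment μ y y * Fᵀ) := by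
  set w : Ω → κ → ℝ := fun ω => F *ᵥ y ω
  have hw : ∀ k, MemLp (fun ω => w ω k) 2 μ := memLp_mulVec_apply F hy
  have hz : ∀ k, MemLp (fun ω => (x - w) ω k) 2 μ := fun k => (hx k).sub (hw k)
  have hxw : secondMoment μ x w = secondMoment μ x y * Fᵀ :=
    secondMoment_mulVec_right F fun k i => (hx k).integrable_mul (hy i)
  have hwx : secondMoment μ w x = F * (secondMoment μ x y)ᵀ := by
    rw [transpose_secondMoment]
    exact secondMoment_mulVec_left F fun i k => (hy i).integrable_mul (hx k)
  have hww : secondMoment μ w w = F * secondMoment μ y y * Fᵀ := by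
    rw [secondMoment_mulVec_left F fun i k => (hy i).integrable_mul (hw k),
      secondMoment_mulVec_right F fun i j => (hy i).integrable_mul (hy j), Matrix.mul_assoc]
  refine (trace_secondMoment_self hz).symm.trans ?_
  rw [secondMoment_sub_left (fun k l => (hx k).integrable_mul (hz l))
      (fun k l => (hw k).integrable_mul (hz l)),
    secondMoment_sub_right (fun k l => (hx k).integrable_mul (hx l))
      (fun k l => (hx k).integrable_mul (hw l)),
    secondMoment_sub_right (fun k l => (hw k).integrable_mul (hx l))
      (fun k l => (hw k).integrable_mul (hw l)),
    hxw, hwx, hww]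
  congr 1
  abel

end ProbabilityTheory

open ProbabilityTheory

theorem mse_frobenius_expansion_general
    {Ω : Type*} [MeasurableSpace Ω] (μ : Measure Ω)
    {m n : ℕ} (x : Ω → Fin m → ℝ) (y : Ω → Fin n → ℝ)
    (hx : ∀ i, MemLp (fun ω => x ω i) 2 μ)
    (hy : ∀ j, MemLp (fun ω => y ω j) 2 μ)
    (Exx : Matrix (Fin m) (Fin m) ℝ) (hExx : ∀ i j, Exx i j = ∫ ω, x ω i * x ω j ∂μ)
    (Exy : Matrix (Fin m) (Fin n) ℝ) (hExy : ∀ i j, Exy i j = ∫ ω, x ω i * y ω j ∂μ)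
    (Eyy : Matrix (Fin n) (Fin n) ℝ) (hEyy : ∀ i j, Eyy i j = ∫ ω, y ω i * y ω j ∂μ)
    (S : Matrix (Fin n) (Fin n) ℝ) (hS : S.PosSemidef) (hSS : S * S = Eyy)
    (B : Matrix (Fin n) (Fin n) ℝ) (hB : IsMoorePenrose S B)
    (F : Matrix (Fin m) (Fin n) ℝ) :
    ∫ ω, ∑ i, (x ω i - F.mulVec (y ω) i) ^ 2 ∂μ =
      Exx.trace - frobNorm (Exy * B) ^ 2 + frobNorm (Exy * B - F * S) ^ 2 := by
  have hExx' : Exx = secondMoment μ x x := Matrix.ext hExx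
  have hExy' : Exy = secondMoment μ x y := Matrix.ext hExy
  have hEyy' : Eyy = secondMoment μ y y := Matrix.ext hEyy
  have hSsymm : S.IsSymm := isHermitian_iff_isSymm.1 hS.isHermitian
  have hproj : Exy * B * S = Exy := by
    refine mul_mul_eq_self_of_ker_le hB.1 fun v hv => ?_
    rw [hExy']
    refine secondMoment_mulVec_eq_zero hx hy ?_
    rw [← hEyy', ← hSS, ← mulVec_mulVec, hv, mulVec_zero]
  rw [integral_sum_sq_sub_mulVec hx hy, ← hExx', ← hExy', ← hEyy', frobNorm_sq_eq_trace,
    frobNorm_sq_eq_trace, sub_mul_mul_transpose_sub_mul hSsymm hproj, hSS]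
  simp only [trace_add, trace_sub]
  ring

theorem mse_frobenius_expansion
    {Ω : Type*} [MeasurableSpace Ω] (μ : Measure Ω) [IsProbabilityMeasure μ]
    {m n : ℕ} (x : Ω → Fin m → ℝ) (y : Ω → Fin n → ℝ)
    (hx : ∀ i, MemLp (fun ω => x ω i) 2 μ)
    (hy : ∀ j, MemLp (fun ω => y ω j) 2 μ)
    (Exx : Matrix (Fin m) (Fin m) ℝ) (hExx : ∀ i j, Exx i j = ∫ ω, x ω i * x ω j ∂μ)
    (Exy : Matrix (Fin m) (Fin n) ℝ) (hExy : ∀ i j, Exy i j = ∫ ω, x ω i * y ω j ∂μ)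
    (Eyy : Matrix (Fin n) (Fin n) ℝ) (hEyy : ∀ i j, Eyy i j = ∫ ω, y ω i * y ω j ∂μ)
    (S : Matrix (Fin n) (Fin n) ℝ) (hS : S.PosSemidef) (hSS : S * S = Eyy)
    (B : Matrix (Fin n) (Fin n) ℝ) (hB : IsMoorePenrose S B)
    (F : Matrix (Fin m) (Fin n) ℝ) :
    ∫ ω, ∑ i, (x ω i - F.mulVec (y ω) i) ^ 2 ∂μ =
      Exx.trace - frobNorm (Exy * B) ^ 2 + frobNorm (Exy * B - F * S) ^ 2 :=
  mse_frobenius_expansion_general μ x y hx hy Exx hExx Exy hExy Eyy hEyy S hS hSS B hB F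
end

section
/- Let (Ω, Σ, μ) be a probability space and let x : Ω → ℝ^m and y : Ω → ℝ^n be random vectors whose components all lie in L²(μ). Let S be the positive semidefinite square root of E_yy, let B be the Moore–Penrose inverse of S, and let B₊ be any best rank-r approximation of the matrix E_xy·B (in the Frobenius norm). Then the matrix F₀ = B₊·B has rank at most r and minimizes the mean square error among all rank-constrained estimators: for every real m×n matrix F with rank F ≤ r, ∫_Ω ‖x(ω) − F₀·y(ω)‖₂² dμ(ω) ≤ ∫_Ω ‖x(ω) − F·y(ω)‖₂² dμ(ω). -/
open MeasureTheory Matrix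

/-! Write `E_yy = S Sᵀ` and `M = E_xy B`. The matrix `E_xy` vanishes on `ker Sᵀ`: if `C S = 0`
then `C y` has zero second moment, so `C y = 0` almost surely. Hence `M Sᵀ = E_xy`, and completing
the square gives `E‖x - F y‖² = E‖x‖² - ‖M‖² + ‖F S - M‖²` in the Frobenius norm. As `B S` is an
orthogonal projection fixing the rows of `M`, `F₀ S - M = (B₊ - M) (B S)`, so
`‖F₀ S - M‖ ≤ ‖B₊ - M‖ ≤ ‖F S - M‖`, the last step because `rank (F S) ≤ r`. -/

section Frobenius

variable {m n : Type*} [Fintype m] [Fintype n]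

theorem frobNorm_nonneg (A : Matrix m n ℝ) : 0 ≤ frobNorm A :=
  Real.sqrt_nonneg _

theorem frobNorm_sq (A : Matrix m n ℝ) : frobNorm A ^ 2 = trace (A * Aᵀ) := by
  rw [frobNorm, Real.sq_sqrt (by positivity)]
  simp [trace, mul_apply, sq]

theorem frobNorm_sub_comm (A C : Matrix m n ℝ) : frobNorm (A - C) = frobNorm (C - A) := by
  simp only [frobNorm, Matrix.sub_apply, sub_sq_comm]

theorem frobNorm_mul_sub_sq {k : Type*} [Fintype k] (F : Matrix m n ℝ) (S : Matrix n k ℝ)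
    (M : Matrix m k ℝ) :
    frobNorm (F * S - M) ^ 2
      = trace (F * (S * Sᵀ) * Fᵀ) - 2 * trace (M * Sᵀ * Fᵀ) + frobNorm M ^ 2 := by
  have hquad : F * S * (F * S)ᵀ = F * (S * Sᵀ) * Fᵀ := by
    rw [transpose_mul, Matrix.mul_assoc, Matrix.mul_assoc, Matrix.mul_assoc]
  have hcross : M * (F * S)ᵀ = M * Sᵀ * Fᵀ := by rw [transpose_mul, Matrix.mul_assoc]
  have hcross' : trace (F * S * Mᵀ) = trace (M * Sᵀ * Fᵀ) := by
    rw [← trace_transpose, transpose_mul, transpose_transpose, hcross]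
  rw [frobNorm_sq, frobNorm_sq, transpose_sub, Matrix.sub_mul, Matrix.mul_sub, Matrix.mul_sub,
    trace_sub, trace_sub, trace_sub, hquad, hcross, hcross']
  ring

/-- Pythagoras for the orthogonal decomposition `A = A P + A (1 - P)`. -/
theorem frobNorm_mul_le_of_isIdempotentElem [DecidableEq n] (A : Matrix m n ℝ)
    {P : Matrix n n ℝ} (hPs : P.IsSymm) (hPP : IsIdempotentElem P) :
    frobNorm (A * P) ≤ frobNorm A := by
  have hQ : (1 - P) * (1 - P)ᵀ = 1 - P := by
    rw [transpose_sub, transpose_one, hPs.eq, sub_mul, one_mul, mul_sub, mul_one, hPP.eq,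
      sub_self, sub_zero]
  have hgram : ∀ Q : Matrix n n ℝ, A * Q * (A * Q)ᵀ = A * (Q * Qᵀ) * Aᵀ := fun Q => by
    rw [transpose_mul, Matrix.mul_assoc, Matrix.mul_assoc, Matrix.mul_assoc]
  have hsplit : frobNorm A ^ 2 = frobNorm (A * P) ^ 2 + frobNorm (A * (1 - P)) ^ 2 := by
    rw [frobNorm_sq, frobNorm_sq, frobNorm_sq, hgram, hgram, hQ, hPs.eq, hPP.eq, ← trace_add,
      ← Matrix.add_mul, ← Matrix.mul_add, add_sub_cancel, Matrix.mul_one]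
  exact (pow_le_pow_iff_left₀ (frobNorm_nonneg _) (frobNorm_nonneg _) two_ne_zero).1
    (hsplit ▸ le_add_of_nonneg_right (sq_nonneg _))

end Frobenius

namespace IsMoorePenrose

variable {m n : Type*} [Fintype m] [Fintype n] {G : Matrix m n ℝ} {B B' : Matrix n m ℝ}

theorem transpose (h : IsMoorePenrose G B) : IsMoorePenrose Gᵀ Bᵀ := by
  obtain ⟨h₁, h₂, h₃, h₄⟩ := h
  refine ⟨?_, ?_, ?_, ?_⟩
  · rw [← transpose_mul, ← transpose_mul, ← Matrix.mul_assoc, h₁]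
  · rw [← transpose_mul, ← transpose_mul, ← Matrix.mul_assoc, h₂]
  · rw [← transpose_mul, transpose_transpose, h₄]
  · rw [← transpose_mul, transpose_transpose, h₃]

theorem unique (h : IsMoorePenrose G B) (h' : IsMoorePenrose G B') : B = B' := by
  obtain ⟨h₁, h₂, h₃, h₄⟩ := h
  obtain ⟨h₁', h₂', h₃', h₄'⟩ := h'
  have hGB : G * B = G * B' :=
    calc G * B = (G * B' * (G * B))ᵀ := by rw [← Matrix.mul_assoc, h₁', h₃]
      _ = G * B * (G * B') := by rw [transpose_mul, h₃, h₃']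
      _ = G * B' := by rw [← Matrix.mul_assoc, h₁]
  have hBG : B * G = B' * G :=
    calc B * G = (B * G * (B' * G))ᵀ := by
          rw [Matrix.mul_assoc, ← Matrix.mul_assoc G, h₁', h₄]
      _ = B' * G * (B * G) := by rw [transpose_mul, h₄, h₄']
      _ = B' * G := by rw [Matrix.mul_assoc, ← Matrix.mul_assoc G, h₁]
  calc B = B * G * B := h₂.symm
    _ = B' * G * B' := by rw [hBG, Matrix.mul_assoc, hGB, ← Matrix.mul_assoc]
    _ = B' := h₂'

theorem isSymm {G B : Matrix n n ℝ} (hG : G.IsSymm) (h : IsMoorePenrose G B) : B.IsSymm :=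
  (hG.eq ▸ h.transpose).unique h

theorem commute {G B : Matrix n n ℝ} (hG : G.IsSymm) (h : IsMoorePenrose G B) : Commute G B := by
  rw [Commute, SemiconjBy, ← h.2.2.2, transpose_mul, hG.eq, (h.isSymm hG).eq]

theorem isIdempotentElem_mul (h : IsMoorePenrose G B) : IsIdempotentElem (B * G) := by
  rw [IsIdempotentElem, ← Matrix.mul_assoc, h.2.1]

theorem mul_mul_self {G B : Matrix n n ℝ} (hG : G.IsSymm) (h : IsMoorePenrose G B) :
    B * (B * G) = B := by
  rw [← (h.commute hG).eq, ← Matrix.mul_assoc, h.2.1]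

end IsMoorePenrose

section SecondMoment

variable {Ω ι κ η : Type*} [MeasurableSpace Ω] {μ : Measure Ω}

variable (μ) in
noncomputable def secondMoment (f : Ω → ι → ℝ) (g : Ω → κ → ℝ) : Matrix ι κ ℝ :=
  Matrix.of fun i j => ∫ ω, f ω i * g ω j ∂μ

@[simp]
theorem secondMoment_apply (f : Ω → ι → ℝ) (g : Ω → κ → ℝ) (i : ι) (j : κ) :
    secondMoment μ f g i j = ∫ ω, f ω i * g ω j ∂μ := rfl

theorem secondMoment_transpose (f : Ω → ι → ℝ) (g : Ω → κ → ℝ) :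
    (secondMoment μ f g)ᵀ = secondMoment μ g f := by
  ext i j
  simp [mul_comm]

theorem memLp_mulVec [Fintype ι] {f : Ω → ι → ℝ} (hf : ∀ i, MemLp (fun ω => f ω i) 2 μ)
    (A : Matrix κ ι ℝ) (k : κ) : MemLp (fun ω => (A *ᵥ f ω) k) 2 μ :=
  memLp_finsetSum _ fun i _ => (hf i).const_mul (A k i)

theorem integrable_mul_of_memLp {f : Ω → ι → ℝ} {g : Ω → κ → ℝ}
    (hf : ∀ i, MemLp (fun ω => f ω i) 2 μ) (hg : ∀ j, MemLp (fun ω => g ω j) 2 μ)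
    (i : ι) (j : κ) : Integrable (fun ω => f ω i * g ω j) μ :=
  (hf i).integrable_mul (hg j)

theorem secondMoment_mulVec_left [Fintype ι] {f : Ω → ι → ℝ} {g : Ω → κ → ℝ}
    (hf : ∀ i, MemLp (fun ω => f ω i) 2 μ) (hg : ∀ j, MemLp (fun ω => g ω j) 2 μ)
    (A : Matrix η ι ℝ) :
    secondMoment μ (fun ω => A *ᵥ f ω) g = A * secondMoment μ f g := by
  ext l j
  simp only [secondMoment_apply, mulVec, dotProduct, Finset.sum_mul, mul_apply, mul_assoc]
  rw [integral_finsetSum _ fun i _ => (integrable_mul_of_memLp hf hg i j).const_mul _]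
  simp only [integral_const_mul]

theorem secondMoment_mulVec_right [Fintype κ] {f : Ω → ι → ℝ} {g : Ω → κ → ℝ}
    (hf : ∀ i, MemLp (fun ω => f ω i) 2 μ) (hg : ∀ j, MemLp (fun ω => g ω j) 2 μ)
    (C : Matrix η κ ℝ) :
    secondMoment μ f (fun ω => C *ᵥ g ω) = secondMoment μ f g * Cᵀ := by
  rw [← secondMoment_transpose, secondMoment_mulVec_left hg hf, transpose_mul,
    secondMoment_transpose]

theorem integrable_dotProduct [Fintype ι] {f g : Ω → ι → ℝ}
    (hf : ∀ i, MemLp (fun ω => f ω i) 2 μ) (hg : ∀ j, MemLp (fun ω => g ω j) 2 μ) :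
    Integrable (fun ω => f ω ⬝ᵥ g ω) μ :=
  integrable_finsetSum _ fun i _ => integrable_mul_of_memLp hf hg i i

theorem integral_dotProduct [Fintype ι] {f g : Ω → ι → ℝ}
    (hf : ∀ i, MemLp (fun ω => f ω i) 2 μ) (hg : ∀ j, MemLp (fun ω => g ω j) 2 μ) :
    ∫ ω, f ω ⬝ᵥ g ω ∂μ = trace (secondMoment μ f g) := by
  simp only [dotProduct, trace, diag, secondMoment_apply]
  exact integral_finsetSum _ fun i _ => integrable_mul_of_memLp hf hg i i

theorem ae_eq_zero_of_trace_secondMoment_self_eq_zero [Fintype ι] {f : Ω → ι → ℝ}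
    (hf : ∀ i, MemLp (fun ω => f ω i) 2 μ) (h : trace (secondMoment μ f f) = 0) :
    f =ᵐ[μ] 0 := by
  rw [← integral_dotProduct hf hf] at h
  have hnonneg : 0 ≤ᵐ[μ] fun ω => f ω ⬝ᵥ f ω :=
    ae_of_all _ fun ω => Finset.sum_nonneg fun i _ => mul_self_nonneg _
  filter_upwards [(integral_eq_zero_iff_of_nonneg_ae hnonneg (integrable_dotProduct hf hf)).1 h]
    with ω hω
  exact dotProduct_self_eq_zero.1 hω

theorem secondMoment_eq_zero_of_ae_eq_zero (f : Ω → ι → ℝ) {g : Ω → κ → ℝ} (hg : g =ᵐ[μ] 0) :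
    secondMoment μ f g = 0 := by
  ext i j
  refine integral_eq_zero_of_ae ?_
  filter_upwards [hg] with ω hω
  simp [hω]

theorem secondMoment_mul_transpose_eq_zero [Fintype κ] [Fintype η]
    {f : Ω → ι → ℝ} {g : Ω → κ → ℝ}
    (hf : ∀ i, MemLp (fun ω => f ω i) 2 μ) (hg : ∀ j, MemLp (fun ω => g ω j) 2 μ)
    {S : Matrix κ η ℝ} (hS : S * Sᵀ = secondMoment μ g g) {C : Matrix κ κ ℝ} (hC : C * S = 0) :
    secondMoment μ f g * Cᵀ = 0 := by
  have hCg : (fun ω => C *ᵥ g ω) =ᵐ[μ] 0 := by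
    refine ae_eq_zero_of_trace_secondMoment_self_eq_zero (memLp_mulVec hg C) ?_
    rw [secondMoment_mulVec_left hg (memLp_mulVec hg C), secondMoment_mulVec_right hg hg, ← hS,
      ← Matrix.mul_assoc, ← Matrix.mul_assoc, hC]
    simp
  rw [← secondMoment_mulVec_right hf hg]
  exact secondMoment_eq_zero_of_ae_eq_zero f hCg

theorem secondMoment_mul_mul_eq_self_of_isMoorePenrose [Fintype κ] [DecidableEq κ]
    {f : Ω → ι → ℝ} {g : Ω → κ → ℝ}
    (hf : ∀ i, MemLp (fun ω => f ω i) 2 μ) (hg : ∀ j, MemLp (fun ω => g ω j) 2 μ)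
    {S B : Matrix κ κ ℝ} (hS : S.IsSymm) (hSS : S * Sᵀ = secondMoment μ g g)
    (hB : IsMoorePenrose S B) :
    secondMoment μ f g * (B * S) = secondMoment μ f g := by
  have h := secondMoment_mul_transpose_eq_zero hf hg hSS (C := 1 - B * S) (by
    rw [sub_mul, one_mul, ← (hB.commute hS).eq, hB.1, sub_self])
  rwa [transpose_sub, transpose_one, hB.2.2.2, Matrix.mul_sub, Matrix.mul_one, sub_eq_zero,
    eq_comm] at h

end SecondMoment

section MeanSquareError

variable {Ω ι κ η : Type*} [MeasurableSpace Ω] {μ : Measure Ω} [Fintype ι] [Fintype κ]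
  {x : Ω → ι → ℝ} {y : Ω → κ → ℝ}

theorem integral_sum_sq_sub_mulVec (hx : ∀ i, MemLp (fun ω => x ω i) 2 μ)
    (hy : ∀ j, MemLp (fun ω => y ω j) 2 μ) (F : Matrix ι κ ℝ) :
    ∫ ω, ∑ i, (x ω i - (F *ᵥ y ω) i) ^ 2 ∂μ
      = trace (secondMoment μ x x) - 2 * trace (secondMoment μ x y * Fᵀ)
        + trace (F * secondMoment μ y y * Fᵀ) := by
  have hFy := memLp_mulVec hy F
  have hexpand : ∀ ω, ∑ i, (x ω i - (F *ᵥ y ω) i) ^ 2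
      = x ω ⬝ᵥ x ω - 2 * x ω ⬝ᵥ (F *ᵥ y ω) + (F *ᵥ y ω) ⬝ᵥ (F *ᵥ y ω) := fun ω => by
    simp only [dotProduct, Finset.mul_sum, ← Finset.sum_sub_distrib, ← Finset.sum_add_distrib]
    exact Finset.sum_congr rfl fun i _ => by ring
  have hxx := integrable_dotProduct hx hx
  have hxy : Integrable (fun ω => 2 * x ω ⬝ᵥ (F *ᵥ y ω)) μ :=
    (integrable_dotProduct hx hFy).const_mul 2
  have hyy := integrable_dotProduct hFy hFy
  simp_rw [hexpand]
  rw [integral_add (by exact hxx.sub hxy) hyy, integral_sub hxx hxy, integral_const_mul,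
    integral_dotProduct hx hx, integral_dotProduct hx hFy, integral_dotProduct hFy hFy,
    secondMoment_mulVec_right hx hy, secondMoment_mulVec_left hy hFy,
    secondMoment_mulVec_right hy hy, Matrix.mul_assoc]

theorem integral_sum_sq_sub_mulVec_eq_frobNorm_sq [Fintype η]
    (hx : ∀ i, MemLp (fun ω => x ω i) 2 μ) (hy : ∀ j, MemLp (fun ω => y ω j) 2 μ)
    {S : Matrix κ η ℝ} (hS : S * Sᵀ = secondMoment μ y y) {M : Matrix ι η ℝ}
    (hM : M * Sᵀ = secondMoment μ x y) (F : Matrix ι κ ℝ) :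
    ∫ ω, ∑ i, (x ω i - (F *ᵥ y ω) i) ^ 2 ∂μ
      = trace (secondMoment μ x x) - frobNorm M ^ 2 + frobNorm (F * S - M) ^ 2 := by
  rw [integral_sum_sq_sub_mulVec hx hy, frobNorm_mul_sub_sq, hS, hM]
  ring

end MeanSquareError

theorem klt_minimizes_rank_constrained_mse_general
    {Ω : Type*} [MeasurableSpace Ω] (μ : Measure Ω)
    {m n : ℕ} (x : Ω → Fin m → ℝ) (y : Ω → Fin n → ℝ)
    (hx : ∀ i, MemLp (fun ω => x ω i) 2 μ)
    (hy : ∀ j, MemLp (fun ω => y ω j) 2 μ)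
    (Exy : Matrix (Fin m) (Fin n) ℝ) (hExy : ∀ i j, Exy i j = ∫ ω, x ω i * y ω j ∂μ)
    (Eyy : Matrix (Fin n) (Fin n) ℝ) (hEyy : ∀ i j, Eyy i j = ∫ ω, y ω i * y ω j ∂μ)
    (S : Matrix (Fin n) (Fin n) ℝ) (hS : S.PosSemidef) (hSS : S * S = Eyy)
    (B : Matrix (Fin n) (Fin n) ℝ) (hB : IsMoorePenrose S B)
    (r : ℕ) (Bplus : Matrix (Fin m) (Fin n) ℝ)
    (hBplusRank : Bplus.rank ≤ r)
    (hBplusBest : ∀ B' : Matrix (Fin m) (Fin n) ℝ, B'.rank ≤ r →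
      frobNorm (Exy * B - Bplus) ≤ frobNorm (Exy * B - B')) :
    (Bplus * B).rank ≤ r ∧
      ∀ F : Matrix (Fin m) (Fin n) ℝ, F.rank ≤ r →
        ∫ ω, ∑ i, (x ω i - (Bplus * B).mulVec (y ω) i) ^ 2 ∂μ ≤
          ∫ ω, ∑ i, (x ω i - F.mulVec (y ω) i) ^ 2 ∂μ := by
  have hSt : S.IsSymm := isHermitian_iff_isSymm.1 hS.isHermitian
  have hEyy' : S * Sᵀ = secondMoment μ y y := by rw [hSt.eq, hSS]; exact Matrix.ext hEyy
  have hExy' : Exy = secondMoment μ x y := Matrix.ext hExy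
  have hExyP : Exy * (B * S) = Exy := by
    rw [hExy']
    exact secondMoment_mul_mul_eq_self_of_isMoorePenrose hx hy hSt hEyy' hB
  have hMS : Exy * B * Sᵀ = secondMoment μ x y := by
    rw [hSt.eq, Matrix.mul_assoc, hExyP, hExy']
  have hMP : Exy * B * (B * S) = Exy * B := by rw [Matrix.mul_assoc, hB.mul_mul_self hSt]
  refine ⟨(rank_mul_le_left _ _).trans hBplusRank, fun F hF => ?_⟩
  rw [integral_sum_sq_sub_mulVec_eq_frobNorm_sq hx hy hEyy' hMS,
    integral_sum_sq_sub_mulVec_eq_frobNorm_sq hx hy hEyy' hMS]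
  gcongr
  · exact frobNorm_nonneg _
  calc frobNorm (Bplus * B * S - Exy * B) = frobNorm ((Bplus - Exy * B) * (B * S)) := by
        rw [Matrix.sub_mul, hMP, Matrix.mul_assoc]
    _ ≤ frobNorm (Bplus - Exy * B) :=
        frobNorm_mul_le_of_isIdempotentElem _ hB.2.2.2 hB.isIdempotentElem_mul
    _ = frobNorm (Exy * B - Bplus) := frobNorm_sub_comm _ _
    _ ≤ frobNorm (Exy * B - F * S) := hBplusBest _ ((rank_mul_le_left _ _).trans hF)
    _ = frobNorm (F * S - Exy * B) := frobNorm_sub_comm _ _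

theorem klt_minimizes_rank_constrained_mse
    {Ω : Type*} [MeasurableSpace Ω] (μ : Measure Ω) [IsProbabilityMeasure μ]
    {m n : ℕ} (x : Ω → Fin m → ℝ) (y : Ω → Fin n → ℝ)
    (hx : ∀ i, MemLp (fun ω => x ω i) 2 μ)
    (hy : ∀ j, MemLp (fun ω => y ω j) 2 μ)
    (Exy : Matrix (Fin m) (Fin n) ℝ) (hExy : ∀ i j, Exy i j = ∫ ω, x ω i * y ω j ∂μ)
    (Eyy : Matrix (Fin n) (Fin n) ℝ) (hEyy : ∀ i j, Eyy i j = ∫ ω, y ω i * y ω j ∂μ)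
    (S : Matrix (Fin n) (Fin n) ℝ) (hS : S.PosSemidef) (hSS : S * S = Eyy)
    (B : Matrix (Fin n) (Fin n) ℝ) (hB : IsMoorePenrose S B)
    (r : ℕ) (Bplus : Matrix (Fin m) (Fin n) ℝ)
    (hBplusRank : Bplus.rank ≤ r)
    (hBplusBest : ∀ B' : Matrix (Fin m) (Fin n) ℝ, B'.rank ≤ r →
      frobNorm (Exy * B - Bplus) ≤ frobNorm (Exy * B - B')) :
    (Bplus * B).rank ≤ r ∧
      ∀ F : Matrix (Fin m) (Fin n) ℝ, F.rank ≤ r →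
        ∫ ω, ∑ i, (x ω i - (Bplus * B).mulVec (y ω) i) ^ 2 ∂μ ≤
          ∫ ω, ∑ i, (x ω i - F.mulVec (y ω) i) ^ 2 ∂μ :=
  klt_minimizes_rank_constrained_mse_general μ x y hx hy Exy hExy Eyy hEyy S hS hSS B hB r Bplus
    hBplusRank hBplusBest
end
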